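/- arXiv:2001.01337 — 4 statements merged into one kernel-verified Lean document; each statement's English description precedes it below -/
import Mathlib

section
/- Let m be a lawful monad on Type u, ι a type, and γ a family of operations assigning to each type X a map γ_X : (ι → m X) → m X. Suppose γ is algebraic, i.e. for all types X, Y, every κ : ι → m X and every f : X → m Y one has (γ_X κ) >>= f = γ_Y (fun i => κ i >>= f). Then γ is determined by its generic effect Γ := γ_ι pure ∈ m ι: for every type X and every μ : ι → m X, γ_X μ = (γ_ι pure) >>= μ. -/
universe u

/-- An algebraic operation family is determined by its generic effect `γ ι pure`. -/
theorem algebraic_op_determined_by_generic_effect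
    {m : Type u → Type u} [Monad m] [LawfulMonad m] {ι : Type u}
    (γ : ∀ X : Type u, (ι → m X) → m X)
    (halg : ∀ (X Y : Type u) (κ : ι → m X) (f : X → m Y),
      (γ X κ) >>= f = γ Y (fun i => κ i >>= f)) :
    ∀ (X : Type u) (μ : ι → m X), γ X μ = (γ ι pure) >>= μ := by
  intro X μ
  rw [halg ι X pure μ]
  simp only [pure_bind]
end

section
/- Let m be a lawful monad on Type u, ι a type, and γ an algebraic ι-ary operation family on m, i.e. for all κ : ι → m X and f : X → m Y, (γ_X κ) >>= f = γ_Y (fun i => κ i >>= f). Let Γ := γ_ι pure be its generic effect. If (Γ, x) is a formal presentation of μ : m X, i.e. μ = Γ >>= (fun i => pure (x i)) for some x : ι → X, then μ = γ_X (fun i => pure (x i)). -/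
universe u

/-- If `(Γ, x)` is a formal presentation of `μ`, where `Γ` is the generic effect of an
algebraic operation family `γ`, then `μ = γ X (fun i => pure (x i))`. -/
theorem presentation_via_algebraic_op
    {m : Type u → Type u} [Monad m] [LawfulMonad m] {ι : Type u}
    (γ : ∀ X : Type u, (ι → m X) → m X)
    (halg : ∀ (X Y : Type u) (κ : ι → m X) (f : X → m Y),
      (γ X κ) >>= f = γ Y (fun i => κ i >>= f))
    {X : Type u} (μ : m X) (x : ι → X)
    (hpres : μ = (γ ι pure) >>= (fun i => pure (x i))) :
    μ = γ X (fun i => pure (x i)) :=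
  calc μ = γ ι pure >>= (fun i => pure (x i)) := hpres
    _ = γ X (fun i => pure i >>= fun i => pure (x i)) := halg _ _ _ _
    _ = γ X (fun i => pure (x i)) := by simp only [pure_bind]
end

section
/- Every probability distribution admits a formal presentation over the natural numbers: for every type X and every μ : PMF X there exist a generic effect Γ : PMF ℕ and a value part s : ℕ → X such that μ = Γ.map s. -/
namespace PMF

variable {α X : Type*}

theorem map_congr_of_eqOn_support (μ : PMF α) {f g : α → X} (h : Set.EqOn f g μ.support) :
    μ.map f = μ.map g := by
  ext x
  simp only [map_apply]
  refine tsum_congr fun a => ?_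
  by_cases ha : a ∈ μ.support
  · rw [h ha]
  · simp [(apply_eq_zero_iff μ a).mpr ha]

theorem exists_map_eq_of_support_subset_range (μ : PMF X) {f : α → X}
    (h : μ.support ⊆ Set.range f) : ∃ ν : PMF α, ν.map f = μ := by
  have : Nonempty α := let ⟨_, hx⟩ := μ.support_nonempty; (h hx).nonempty
  refine ⟨μ.map (Function.invFun f), ?_⟩
  calc (μ.map (Function.invFun f)).map f = μ.map (f ∘ Function.invFun f) := map_comp _ _ _
    _ = μ.map id := map_congr_of_eqOn_support μ fun _ hx => Function.invFun_eq (h hx)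
    _ = μ := map_id μ

end PMF

/-- Every probability distribution admits a formal presentation over the natural numbers. -/
theorem pmf_formal_presentation {X : Type*} (μ : PMF X) :
    ∃ (Γ : PMF ℕ) (s : ℕ → X), μ = Γ.map s := by
  obtain ⟨s, hs⟩ := μ.support_countable.exists_eq_range μ.support_nonempty
  obtain ⟨Γ, hΓ⟩ := μ.exists_map_eq_of_support_subset_range hs.subset
  exact ⟨Γ, s, hΓ.symm⟩
end

section
/- For commutative monads, the bottom effect also absorbs on the right: let m be a lawful monad on Type u that is commutative, i.e. for all types ι, κ, X, all Γ : m ι, Δ : m κ and x : ι → κ → X one has Γ >>= (fun i => Δ >>= (fun j => pure (x i j))) = Δ >>= (fun j => Γ >>= (fun i => pure (x i j))). Let ⊥₀ : m PEmpty and define ⊥_X := PEmpty.elim <$> ⊥₀. Then for every Γ : m ι, Γ >>= (fun _ => ⊥_X) = ⊥_X. -/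
universe u

theorem bind_eq_map_of_isEmpty {m : Type u → Type u} [Monad m] [LawfulMonad m]
    {κ α : Type u} [IsEmpty κ] (Δ : m κ) (f : κ → m α) (g : κ → α) :
    Δ >>= f = g <$> Δ := by
  rw [map_eq_pure_bind]
  exact bind_congr isEmptyElim

/-- For commutative monads, the bottom effect absorbs on the right. -/
theorem bottom_effect_absorbs_right_of_commutative
    {m : Type u → Type u} [Monad m] [LawfulMonad m]
    (hcomm : ∀ {ι κ X : Type u} (Γ : m ι) (Δ : m κ) (x : ι → κ → X),
      Γ >>= (fun i => Δ >>= (fun j => pure (x i j)))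
        = Δ >>= (fun j => Γ >>= (fun i => pure (x i j))))
    (bot0 : m PEmpty) {ι X : Type u} (Γ : m ι) :
    Γ >>= (fun _ => (PEmpty.elim <$> bot0 : m X)) = (PEmpty.elim <$> bot0 : m X) := by
  calc Γ >>= (fun _ => (PEmpty.elim <$> bot0 : m X))
      = Γ >>= (fun _ => bot0 >>= fun e => pure e.elim) := by simp only [map_eq_pure_bind]
    _ = bot0 >>= (fun e => Γ >>= fun _ => pure e.elim) := hcomm Γ bot0 fun _ e => e.elim
    _ = PEmpty.elim <$> bot0 := bind_eq_map_of_isEmpty bot0 _ _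
end
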